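/- arXiv:1201.5972 — 6 statements merged into one kernel-verified Lean document; each statement's English description precedes it below -/
import Mathlib

section
/- For any two centrally symmetric convex bodies K and D in R^n, the covering number N(K,D) satisfies vol(K)/vol(K ∩ D) ≤ N(K,D) ≤ 3^n · vol(K)/vol(K ∩ D). -/
/-!
Lower bound: every translate `x + D` meets `K` in volume at most `vol (K ∩ D)`. Indeed, for
`A = K ∩ (x + D)` the set `½ (A + (-A))` lies in `K ∩ D` by symmetry and convexity, and the
multiplicative Brunn–Minkowski inequality `vol A * vol (-A) ≤ vol (½ (A + (-A)))²` follows from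
the Prékopa–Leindler inequality, which is proved in dimension one through superlevel sets and the
one-dimensional Brunn–Minkowski inequality, and then by induction on the dimension via Fubini.

Upper bound: take a maximal family of points of `K` whose translates of `½ (K ∩ D)` are pairwise
disjoint. By maximality the translates of `K ∩ D` cover `K`, and the disjoint half-size translates
all lie in `(3/2) K`, so their number is at most `3ⁿ vol K / vol (K ∩ D)`.
-/

open Pointwise MeasureTheory

/-- Covering number: minimum number of translates of `B` needed to cover `A`. -/
noncomputable def covN {n : ℕ} (A B : Set (Fin n → ℝ)) : ℕ :=
  sInf {k | ∃ t : Finset (Fin n → ℝ), t.card = k ∧ A ⊆ ⋃ x ∈ t, x +ᵥ B}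

open ENNReal NNReal Set

lemma ENNReal.min_le_of_mul_le_sq {a b c : ℝ≥0∞} (h : a * b ≤ c ^ 2) : min a b ≤ c := by
  by_contra! hc
  exact (ENNReal.pow_lt_pow_left two_ne_zero hc).not_ge <|
    (sq (min a b)).trans_le (mul_le_mul' (min_le_left a b) (min_le_right a b)) |>.trans h

lemma ENNReal.four_mul_le_sq_add (a b : ℝ≥0∞) : 4 * a * b ≤ (a + b) ^ 2 := by
  rcases eq_or_ne a ∞ with rfl | ha
  · simp
  rcases eq_or_ne b ∞ with rfl | hb
  · simp
  lift a to ℝ≥0 using ha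
  lift b to ℝ≥0 using hb
  exact_mod_cast _root_.four_mul_le_sq_add a b

lemma Convex.inv_two_smul_add_mem {E : Type*} [AddCommGroup E] [Module ℝ E] {s : Set E}
    (h : Convex ℝ s) {x y : E} (hx : x ∈ s) (hy : y ∈ s) : (2 : ℝ)⁻¹ • (x + y) ∈ s := by
  simpa [midpoint_eq_smul_add] using h.midpoint_mem hx hy

theorem Convex.zero_mem_interior_of_eq_neg {E : Type*} [AddCommGroup E] [Module ℝ E]
    [TopologicalSpace E] [IsTopologicalAddGroup E] [ContinuousConstSMul ℝ E] {K : Set E}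
    (hK : Convex ℝ K) (hKint : (interior K).Nonempty) (hKsym : K = -K) :
    (0 : E) ∈ interior K := by
  obtain ⟨x, hx⟩ := hKint
  have hx' : -x ∈ interior K := by
    have := mem_image_of_mem (Homeomorph.neg E) hx
    rw [Homeomorph.image_interior] at this
    rw [hKsym]
    simpa using this
  simpa using hK.interior.inv_two_smul_add_mem hx hx'

theorem Finset.exists_maximal_of_card_le {α : Type*} [DecidableEq α] {P : Finset α → Prop}
    (N : ℕ) (h0 : P ∅) (hN : ∀ t, P t → t.card ≤ N) :
    ∃ t, P t ∧ ∀ y ∉ t, ¬P (insert y t) := by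
  by_contra! hext
  have hcard (k : ℕ) : ∃ t, P t ∧ t.card = k := by
    induction k with
    | zero => exact ⟨∅, h0, rfl⟩
    | succ k ih =>
      obtain ⟨t, ht, rfl⟩ := ih
      obtain ⟨y, hy, hPy⟩ := hext t ht
      exact ⟨_, hPy, card_insert_of_notMem hy⟩
  obtain ⟨t, ht, htN⟩ := hcard (N + 1)
  have := hN t ht
  omega

lemma volume_setOf_pos_ofReal_lt (c : ℝ≥0∞) :
    volume {t : ℝ | 0 < t ∧ ENNReal.ofReal t < c} = c := by
  rcases eq_or_ne c ∞ with rfl | hc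
  · simp only [ofReal_lt_top, and_true]
    exact Real.volume_Ioi
  · have : {t : ℝ | 0 < t ∧ ENNReal.ofReal t < c} = Ioo 0 c.toReal := by
      ext t
      exact and_congr_right fun ht => ENNReal.ofReal_lt_iff_lt_toReal ht.le hc
    rw [this, Real.volume_Ioo, sub_zero, ENNReal.ofReal_toReal hc]

theorem lintegral_eq_lintegral_meas_ofReal_lt {α : Type*} [MeasurableSpace α] (μ : Measure α)
    [SFinite μ] {f : α → ℝ≥0∞} (hf : Measurable f) :
    ∫⁻ x, f x ∂μ = ∫⁻ t in Ioi 0, μ {x | ENNReal.ofReal t < f x} := by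
  set S : Set (α × ℝ) := {p | 0 < p.2 ∧ ENNReal.ofReal p.2 < f p.1}
  have hS : MeasurableSet S := (measurableSet_lt measurable_const measurable_snd).inter
    (measurableSet_lt (ENNReal.measurable_ofReal.comp measurable_snd) (hf.comp measurable_fst))
  calc ∫⁻ x, f x ∂μ = μ.prod volume S := by
        rw [Measure.prod_apply hS]
        exact lintegral_congr fun x => (volume_setOf_pos_ofReal_lt (f x)).symm
    _ = ∫⁻ t, (Ioi 0).indicator (fun t => μ {x | ENNReal.ofReal t < f x}) t := by
        rw [Measure.prod_apply_symm hS]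
        congr with t
        by_cases ht : 0 < t <;> simp [S, ht]
    _ = _ := lintegral_indicator measurableSet_Ioi _

theorem Real.volume_add_volume_le_volume_add_of_isCompact {A B : Set ℝ} (hA : A.Nonempty)
    (hB : B.Nonempty) (hAc : IsCompact A) (hBc : IsCompact B) :
    volume A + volume B ≤ volume (A + B) := by
  have ha : sSup A ∈ A := hAc.sSup_mem hA
  have hb : sInf B ∈ B := hBc.sInf_mem hB
  -- the two translates lie on either side of `sSup A + sInf B`
  have hmeet : (sInf B +ᵥ A) ∩ (sSup A +ᵥ B) ⊆ {sSup A + sInf B} := by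
    rintro _ ⟨⟨x, hx, rfl⟩, ⟨y, hy, hxy⟩⟩
    have := le_csSup hAc.bddAbove hx
    have := csInf_le hBc.bddBelow hy
    simp only [vadd_eq_add, mem_singleton_iff] at hxy ⊢
    linarith
  calc volume A + volume B = volume (sInf B +ᵥ A) + volume (sSup A +ᵥ B) := by
        rw [measure_vadd, measure_vadd]
    _ = volume ((sInf B +ᵥ A) ∪ (sSup A +ᵥ B)) :=
        (measure_union₀ (hBc.measurableSet.const_vadd _).nullMeasurableSet
          (measure_mono_null hmeet (measure_singleton _))).symm
    _ ≤ volume (A + B) := measure_mono <|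
        union_subset (add_comm B A ▸ vadd_set_subset_add hb) (vadd_set_subset_add ha)

theorem Real.volume_add_volume_le_volume_add {A B : Set ℝ} (hA : A.Nonempty) (hB : B.Nonempty)
    (hAm : MeasurableSet A) (hBm : MeasurableSet B) :
    volume A + volume B ≤ volume (A + B) := by
  obtain ⟨a, ha⟩ := hA
  obtain ⟨b, hb⟩ := hB
  rw [hAm.measure_eq_iSup_isCompact, hBm.measure_eq_iSup_isCompact]
  simp only [iSup_and']
  refine ENNReal.biSup_add_biSup_le' ⟨∅, empty_subset _, isCompact_empty⟩
    ⟨∅, empty_subset _, isCompact_empty⟩ fun KA ⟨hKA, hKAc⟩ KB ⟨hKB, hKBc⟩ => ?_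
  calc volume KA + volume KB ≤ volume (insert a KA) + volume (insert b KB) := by
        gcongr <;> exact subset_insert _ _
    _ ≤ volume (insert a KA + insert b KB) :=
        volume_add_volume_le_volume_add_of_isCompact (insert_nonempty _ _)
          (insert_nonempty _ _) (hKAc.insert a) (hKBc.insert b)
    _ ≤ volume (A + B) :=
        measure_mono (add_subset_add (insert_subset ha hKA) (insert_subset hb hKB))

lemma Real.volume_inv_two_smul (s : Set ℝ) : volume ((2 : ℝ)⁻¹ • s) = 2⁻¹ * volume s := by
  rw [Measure.addHaar_smul, Module.finrank_self, pow_one, abs_of_pos (by norm_num),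
    ENNReal.ofReal_inv_of_pos two_pos, ENNReal.ofReal_ofNat]

theorem lintegral_add_lintegral_le_two_mul_of_iSup_eq {f g h : ℝ → ℝ≥0∞} (hf : Measurable f)
    (hg : Measurable g) (hh : Measurable h) (hsup : ⨆ x, f x = ⨆ y, g y)
    (H : ∀ x y, min (f x) (g y) ≤ h ((2 : ℝ)⁻¹ • (x + y))) :
    (∫⁻ x, f x) + ∫⁻ y, g y ≤ 2 * ∫⁻ z, h z := by
  rw [lintegral_eq_lintegral_meas_ofReal_lt volume hf,
    lintegral_eq_lintegral_meas_ofReal_lt volume hg,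
    lintegral_eq_lintegral_meas_ofReal_lt volume hh, ← lintegral_const_mul' _ _ ofNat_ne_top]
  refine le_lintegral_add _ _ |>.trans (lintegral_mono fun t => ?_)
  set Sf := {x | ENNReal.ofReal t < f x}
  set Sg := {y | ENNReal.ofReal t < g y}
  rcases lt_or_ge (ENNReal.ofReal t) (⨆ x, f x) with ht | ht
  · have hSf : Sf.Nonempty := lt_iSup_iff.1 ht
    have hSg : Sg.Nonempty := lt_iSup_iff.1 (ht.trans_eq hsup)
    have hlevel : (2 : ℝ)⁻¹ • (Sf + Sg) ⊆ {z | ENNReal.ofReal t < h z} := by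
      rintro _ ⟨_, ⟨x, hx, y, hy, rfl⟩, rfl⟩
      exact (lt_min hx hy).trans_le (H x y)
    calc volume Sf + volume Sg ≤ volume (Sf + Sg) :=
          Real.volume_add_volume_le_volume_add hSf hSg (measurableSet_lt measurable_const hf)
            (measurableSet_lt measurable_const hg)
      _ = 2 * volume ((2 : ℝ)⁻¹ • (Sf + Sg)) := by
          rw [Real.volume_inv_two_smul, ← mul_assoc,
            ENNReal.mul_inv_cancel two_ne_zero ofNat_ne_top, one_mul]
      _ ≤ 2 * volume {z | ENNReal.ofReal t < h z} := by gcongr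
  · have hSf : Sf = ∅ := eq_empty_of_forall_notMem fun x hx => hx.not_ge ((le_iSup f x).trans ht)
    have hSg : Sg = ∅ :=
      eq_empty_of_forall_notMem fun y hy => hy.not_ge ((le_iSup g y).trans (hsup.symm.trans_le ht))
    simp [hSf, hSg]

theorem lintegral_mul_lintegral_le_sq_of_iSup_ne_top {f g h : ℝ → ℝ≥0∞} (hf : Measurable f)
    (hg : Measurable g) (hh : Measurable h) (hfsup : ⨆ x, f x ≠ ∞) (hgsup : ⨆ y, g y ≠ ∞)
    (H : ∀ x y, f x * g y ≤ h ((2 : ℝ)⁻¹ • (x + y)) ^ 2) :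
    (∫⁻ x, f x) * ∫⁻ y, g y ≤ (∫⁻ z, h z) ^ 2 := by
  set a := ⨆ x, f x
  set b := ⨆ y, g y
  rcases eq_or_ne a 0 with ha | ha
  · simp [show f = 0 from funext (ENNReal.iSup_eq_zero.1 ha)]
  rcases eq_or_ne b 0 with hb | hb
  · simp [show g = 0 from funext (ENNReal.iSup_eq_zero.1 hb)]
  have hab : a * b ≠ ∞ := mul_ne_top hfsup hgsup
  set s : ℝ≥0∞ := (NNReal.sqrt (a * b).toNNReal : ℝ≥0∞)
  have hs : s ^ 2 = a * b := by
    rw [← ENNReal.coe_pow, NNReal.sq_sqrt, ENNReal.coe_toNNReal hab]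
  -- rescaling `f` by `b` and `g` by `a` equalizes their suprema
  have key := lintegral_add_lintegral_le_two_mul_of_iSup_eq (hf.mul_const b) (hg.mul_const a)
    (hh.mul_const s) (by simp only [← ENNReal.iSup_mul]; exact mul_comm a b) fun x y =>
      ENNReal.min_le_of_mul_le_sq <| calc
        f x * b * (g y * a) = f x * g y * s ^ 2 := by rw [hs]; ring
        _ ≤ h ((2 : ℝ)⁻¹ • (x + y)) ^ 2 * s ^ 2 := by gcongr; exact H x y
        _ = (h ((2 : ℝ)⁻¹ • (x + y)) * s) ^ 2 := (mul_pow _ _ _).symm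
  rw [lintegral_mul_const _ hf, lintegral_mul_const _ hg, lintegral_mul_const _ hh] at key
  refine (ENNReal.mul_le_mul_iff_right (c := (∫⁻ z, h z) ^ 2) (mul_ne_zero four_ne_zero
    (mul_ne_zero ha hb)) (mul_ne_top ofNat_ne_top hab)).1 ?_
  calc 4 * (a * b) * ((∫⁻ x, f x) * ∫⁻ y, g y)
      = 4 * ((∫⁻ x, f x) * b) * ((∫⁻ y, g y) * a) := by ring
    _ ≤ ((∫⁻ x, f x) * b + (∫⁻ y, g y) * a) ^ 2 := ENNReal.four_mul_le_sq_add _ _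
    _ ≤ (2 * ((∫⁻ z, h z) * s)) ^ 2 := by gcongr
    _ = 4 * (a * b) * (∫⁻ z, h z) ^ 2 := by rw [← hs]; ring

def PrekopaLeindler {E : Type*} [AddCommGroup E] [Module ℝ E] [MeasurableSpace E]
    (μ : Measure E) : Prop :=
  ∀ f g h : E → ℝ≥0∞, Measurable f → Measurable g → Measurable h →
    (∀ x y, f x * g y ≤ h ((2 : ℝ)⁻¹ • (x + y)) ^ 2) →
      (∫⁻ x, f x ∂μ) * ∫⁻ y, g y ∂μ ≤ (∫⁻ z, h z ∂μ) ^ 2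

lemma lintegral_eq_iSup_lintegral_min_natCast {α : Type*} [MeasurableSpace α] {μ : Measure α}
    {f : α → ℝ≥0∞} (hf : Measurable f) :
    ∫⁻ x, f x ∂μ = ⨆ N : ℕ, ∫⁻ x, min (f x) N ∂μ := by
  rw [← lintegral_iSup (fun N => hf.min measurable_const)
    fun N M hNM x => min_le_min_left _ (Nat.cast_le.2 hNM)]
  congr with x
  rw [← inf_iSup_eq, ENNReal.iSup_natCast, inf_top_eq]

theorem Real.prekopaLeindler_volume : PrekopaLeindler (volume : Measure ℝ) := by
  intro f g h hf hg hh H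
  rw [lintegral_eq_iSup_lintegral_min_natCast hf, lintegral_eq_iSup_lintegral_min_natCast hg,
    ENNReal.iSup_mul]
  refine iSup_le fun N => ?_
  rw [ENNReal.mul_iSup]
  refine iSup_le fun M => ?_
  exact lintegral_mul_lintegral_le_sq_of_iSup_ne_top (hf.min measurable_const)
    (hg.min measurable_const) hh
    (ne_top_of_le_ne_top (natCast_ne_top N) (iSup_le fun _ => min_le_right _ _))
    (ne_top_of_le_ne_top (natCast_ne_top M) (iSup_le fun _ => min_le_right _ _))
    fun x y => (mul_le_mul' (min_le_left _ _) (min_le_left _ _)).trans (H x y)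

namespace PrekopaLeindler

variable {E F : Type*} [AddCommGroup E] [Module ℝ E] [MeasurableSpace E]
  [AddCommGroup F] [Module ℝ F] [MeasurableSpace F] {μ : Measure E} {ν : Measure F}

theorem prod [SFinite ν] (hμ : PrekopaLeindler μ) (hν : PrekopaLeindler ν) :
    PrekopaLeindler (μ.prod ν) := by
  intro f g h hf hg hh H
  rw [lintegral_prod _ hf.aemeasurable, lintegral_prod _ hg.aemeasurable,
    lintegral_prod _ hh.aemeasurable]
  refine hμ _ _ _ hf.lintegral_prod_right' hg.lintegral_prod_right' hh.lintegral_prod_right'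
    fun x x' => hν _ _ _ (hf.comp measurable_prodMk_left) (hg.comp measurable_prodMk_left)
      (hh.comp measurable_prodMk_left) fun y y' => H (x, y) (x', y')

theorem of_measurePreserving (hν : PrekopaLeindler ν) (e : E ≃ᵐ F) (he : MeasurePreserving e μ ν)
    (hmid : ∀ x y, e ((2 : ℝ)⁻¹ • (x + y)) = (2 : ℝ)⁻¹ • (e x + e y)) :
    PrekopaLeindler μ := by
  intro f g h hf hg hh H
  have hint (u : E → ℝ≥0∞) : ∫⁻ x, u x ∂μ = ∫⁻ y, u (e.symm y) ∂ν := by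
    rw [← he.lintegral_comp_emb e.measurableEmbedding]
    simp
  rw [hint f, hint g, hint h]
  refine hν _ _ _ (hf.comp e.symm.measurable) (hg.comp e.symm.measurable)
    (hh.comp e.symm.measurable) fun y y' => ?_
  have : e.symm ((2 : ℝ)⁻¹ • (y + y')) = (2 : ℝ)⁻¹ • (e.symm y + e.symm y') :=
    e.symm_apply_eq.2 (by rw [hmid, e.apply_symm_apply, e.apply_symm_apply])
  rw [this]
  exact H _ _

end PrekopaLeindler

theorem prekopaLeindler_volume_pi (n : ℕ) : PrekopaLeindler (volume : Measure (Fin n → ℝ)) := by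
  induction n with
  | zero =>
    intro f g h _ _ _ H
    have hvol : (volume : Measure (Fin 0 → ℝ)) univ = 1 := by simp [volume_pi]
    simp only [lintegral_unique, hvol, mul_one]
    convert H default default
  | succ n ih =>
    exact (Real.prekopaLeindler_volume.prod ih).of_measurePreserving _
      (volume_preserving_piFinSuccAbove (fun _ => ℝ) 0) fun x y => by
        ext <;> simp [MeasurableEquiv.piFinSuccAbove, Fin.tail, mul_add]

theorem PrekopaLeindler.measure_mul_measure_le_sq {E : Type*} [AddCommGroup E] [Module ℝ E]
    [MeasurableSpace E] {μ : Measure E} (hμ : PrekopaLeindler μ) {A B C : Set E}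
    (hA : MeasurableSet A) (hB : MeasurableSet B) (hC : MeasurableSet C)
    (hABC : (2 : ℝ)⁻¹ • (A + B) ⊆ C) :
    μ A * μ B ≤ μ C ^ 2 := by
  have := hμ _ _ _ (measurable_one.indicator hA) (measurable_one.indicator hB)
    (measurable_one.indicator hC) fun x y => ?_
  · simpa [lintegral_indicator_one hA, lintegral_indicator_one hB, lintegral_indicator_one hC]
      using this
  by_cases hx : x ∈ A
  · by_cases hy : y ∈ B
    · have hxy : (2 : ℝ)⁻¹ • (x + y) ∈ C := hABC (smul_mem_smul_set (add_mem_add hx hy))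
      rw [indicator_of_mem hx, indicator_of_mem hy, indicator_of_mem hxy]
      simp
    · simp [hy]
  · simp [hx]

theorem measure_inter_vadd_le_measure_inter {E : Type*} [AddCommGroup E] [Module ℝ E]
    [MeasurableSpace E] [MeasurableNeg E] [MeasurableAdd E] {μ : Measure E} [μ.IsNegInvariant]
    (hμ : PrekopaLeindler μ) {K D : Set E} (hKconv : Convex ℝ K) (hKsym : K = -K)
    (hDconv : Convex ℝ D) (hDsym : D = -D) (hK : MeasurableSet K) (hD : MeasurableSet D)
    (x : E) :
    μ (K ∩ (x +ᵥ D)) ≤ μ (K ∩ D) := by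
  set A := K ∩ (x +ᵥ D)
  have hA : MeasurableSet A := hK.inter (hD.const_vadd x)
  -- `½ (x + d) + ½ (-(x + d')) = ½ d + ½ (-d')` lies in `K ∩ D`
  have hmid : (2 : ℝ)⁻¹ • (A + -A) ⊆ K ∩ D := by
    rintro _ ⟨_, ⟨p, ⟨hpK, d, hd, rfl⟩, q, ⟨hqK, d', hd', hq⟩, rfl⟩, rfl⟩
    rw [hKsym, mem_neg] at hqK
    rw [hDsym, mem_neg] at hd'
    simp only [vadd_eq_add, neg_neg] at hpK hqK hq ⊢
    have hq' : q = -(x + d') := by rw [hq, neg_neg]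
    refine ⟨hKconv.inv_two_smul_add_mem hpK hqK, ?_⟩
    convert hDconv.inv_two_smul_add_mem hd hd' using 1
    rw [hq']
    module
  have := hμ.measure_mul_measure_le_sq hA hA.neg (hK.inter hD) hmid
  rw [Measure.measure_neg] at this
  simpa using ENNReal.min_le_of_mul_le_sq this

section Packing

variable {E : Type*}

theorem subset_iUnion_vadd_of_maximal [AddCommGroup E] [Module ℝ E] {K B : Set E} {t : Finset E}
    (hBconv : Convex ℝ B) (hBsym : B = -B) (hB0 : (0 : E) ∈ B)
    (ht : (t : Set E).PairwiseDisjoint (· +ᵥ (2 : ℝ)⁻¹ • B))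
    (hmax : ∀ y ∈ K, y ∉ t → ¬(insert y (t : Set E)).PairwiseDisjoint (· +ᵥ (2 : ℝ)⁻¹ • B)) :
    K ⊆ ⋃ x ∈ t, x +ᵥ B := by
  intro y hyK
  by_contra hy
  refine hmax y hyK (fun hyt => hy (mem_biUnion hyt ⟨0, hB0, add_zero y⟩))
    (ht.insert fun x hx _ => disjoint_left.2 ?_)
  rintro _ ⟨_, ⟨u, hu, rfl⟩, rfl⟩ ⟨_, ⟨w, hw, rfl⟩, hxw⟩
  rw [hBsym] at hu
  -- `y + ½ u = x + ½ w` forces `y = x + ½ (w + (-u)) ∈ x + B`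
  refine hy (mem_biUnion hx ⟨_, hBconv.inv_two_smul_add_mem hw hu, ?_⟩)
  simp only [vadd_eq_add] at hxw ⊢
  rw [smul_add, smul_neg, ← add_assoc, hxw]
  abel

variable [NormedAddCommGroup E] [NormedSpace ℝ E] [MeasurableSpace E] [BorelSpace E]
  [FiniteDimensional ℝ E] (μ : Measure E) [μ.IsAddHaarMeasure]

lemma Measure.addHaar_ofNat_smul (k : ℕ) [k.AtLeastTwo] (s : Set E) :
    μ ((OfNat.ofNat k : ℝ) • s) = OfNat.ofNat k ^ Module.finrank ℝ E * μ s := by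
  rw [Measure.addHaar_smul_of_nonneg μ (Nat.ofNat_nonneg _),
    ENNReal.ofReal_pow (Nat.ofNat_nonneg _), ENNReal.ofReal_ofNat]

theorem card_mul_measure_le_of_pairwiseDisjoint {K B : Set E} {t : Finset E}
    (hKconv : Convex ℝ K) (hBK : B ⊆ K) (hB : MeasurableSet B) (htK : (t : Set E) ⊆ K)
    (ht : (t : Set E).PairwiseDisjoint (· +ᵥ (2 : ℝ)⁻¹ • B)) :
    t.card * μ B ≤ 3 ^ Module.finrank ℝ E * μ K := by
  have hhalf : MeasurableSet ((2 : ℝ)⁻¹ • B) := hB.const_smul₀ _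
  -- `x + ½ w = (3/2) • ((2/3) • x + (1/3) • w)`
  have hsub : (⋃ x ∈ t, x +ᵥ (2 : ℝ)⁻¹ • B) ⊆ (2 : ℝ)⁻¹ • (3 : ℝ) • K := by
    refine iUnion₂_subset fun x hx => ?_
    rintro _ ⟨_, ⟨w, hw, rfl⟩, rfl⟩
    refine ⟨_, ⟨(2 / 3 : ℝ) • x + (1 / 3 : ℝ) • w, hKconv (htK hx) (hBK hw) (by norm_num)
      (by norm_num) (by norm_num), rfl⟩, ?_⟩
    simp only [vadd_eq_add]
    module
  calc t.card * μ B = 2 ^ Module.finrank ℝ E * (t.card * μ ((2 : ℝ)⁻¹ • B)) := by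
        rw [mul_left_comm, ← Measure.addHaar_ofNat_smul, smul_smul, mul_inv_cancel₀ two_ne_zero,
          one_smul]
    _ = 2 ^ Module.finrank ℝ E * μ (⋃ x ∈ t, x +ᵥ (2 : ℝ)⁻¹ • B) := by
        rw [measure_biUnion_finset ht fun x _ => hhalf.const_vadd x]
        simp [measure_vadd]
    _ ≤ 2 ^ Module.finrank ℝ E * μ ((2 : ℝ)⁻¹ • (3 : ℝ) • K) := by gcongr
    _ = 3 ^ Module.finrank ℝ E * μ K := by
        rw [← Measure.addHaar_ofNat_smul, smul_smul, mul_inv_cancel₀ two_ne_zero, one_smul,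
          Measure.addHaar_ofNat_smul]

theorem exists_finset_subset_iUnion_vadd_card_mul_le {K B : Set E} (hKconv : Convex ℝ K)
    (hKcomp : IsCompact K) (hBconv : Convex ℝ B) (hBsym : B = -B) (hB : MeasurableSet B)
    (hBK : B ⊆ K) (hB0 : (0 : E) ∈ B) (hBpos : μ B ≠ 0) :
    ∃ t : Finset E, K ⊆ ⋃ x ∈ t, x +ᵥ B ∧ t.card * μ B ≤ 3 ^ Module.finrank ℝ E * μ K := by
  classical
  set P : Finset E → Prop :=
    fun t => (t : Set E) ⊆ K ∧ (t : Set E).PairwiseDisjoint (· +ᵥ (2 : ℝ)⁻¹ • B)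
  have hbound (t : Finset E) (ht : P t) : t.card * μ B ≤ 3 ^ Module.finrank ℝ E * μ K :=
    card_mul_measure_le_of_pairwiseDisjoint μ hKconv hBK hB ht.1 ht.2
  have hfin : 3 ^ Module.finrank ℝ E * μ K ≠ ∞ :=
    mul_ne_top (pow_ne_top ofNat_ne_top) hKcomp.measure_ne_top
  obtain ⟨N, hN⟩ := ENNReal.exists_nat_gt (ENNReal.div_lt_top hfin hBpos).ne
  obtain ⟨t, ⟨htK, ht⟩, hmax⟩ := Finset.exists_maximal_of_card_le (P := P) N (by simp [P])
    fun t ht => by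
      have := ((ENNReal.le_div_iff_mul_le (Or.inl hBpos) (Or.inr hfin)).2 (hbound t ht)).trans_lt hN
      exact_mod_cast this.le
  refine ⟨t, subset_iUnion_vadd_of_maximal hBconv hBsym hB0 ht fun y hyK hyt hdisj =>
    hmax y hyt ⟨?_, ?_⟩, hbound t ⟨htK, ht⟩⟩
  · rw [Finset.coe_insert]
    exact insert_subset hyK htK
  · rwa [Finset.coe_insert]

end Packing

theorem measure_le_card_mul_of_subset_iUnion_vadd {E : Type*} [AddCommGroup E] [MeasurableSpace E]
    {μ : Measure E} {A D : Set E} {t : Finset E} {c : ℝ≥0∞} (hcov : A ⊆ ⋃ x ∈ t, x +ᵥ D)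
    (hc : ∀ x : E, μ (A ∩ (x +ᵥ D)) ≤ c) :
    μ A ≤ t.card * c :=
  calc μ A ≤ μ (⋃ x ∈ t, A ∩ (x +ᵥ D)) := measure_mono <| by
        rw [← inter_iUnion₂]
        exact subset_inter subset_rfl hcov
    _ ≤ ∑ x ∈ t, μ (A ∩ (x +ᵥ D)) := measure_biUnion_finset_le _ _
    _ ≤ ∑ _x ∈ t, c := Finset.sum_le_sum fun x _ => hc x
    _ = t.card * c := by rw [Finset.sum_const, nsmul_eq_mul]

lemma covN_le_card {n : ℕ} {A B : Set (Fin n → ℝ)} {t : Finset (Fin n → ℝ)}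
    (h : A ⊆ ⋃ x ∈ t, x +ᵥ B) : covN A B ≤ t.card :=
  Nat.sInf_le ⟨t, rfl, h⟩

lemma exists_card_eq_covN {n : ℕ} {A B : Set (Fin n → ℝ)} {t : Finset (Fin n → ℝ)}
    (h : A ⊆ ⋃ x ∈ t, x +ᵥ B) :
    ∃ s : Finset (Fin n → ℝ), s.card = covN A B ∧ A ⊆ ⋃ x ∈ s, x +ᵥ B :=
  Nat.sInf_mem (s := {k | ∃ t : Finset (Fin n → ℝ), t.card = k ∧ A ⊆ ⋃ x ∈ t, x +ᵥ B})
    ⟨t.card, t, rfl, h⟩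

theorem volume_le_covN_mul_volume_inter {n : ℕ} {K D : Set (Fin n → ℝ)} (hKconv : Convex ℝ K)
    (hKsym : K = -K) (hDconv : Convex ℝ D) (hDsym : D = -D) (hK : MeasurableSet K)
    (hD : MeasurableSet D) {t : Finset (Fin n → ℝ)} (hcov : K ⊆ ⋃ x ∈ t, x +ᵥ D) :
    volume K ≤ covN K D * volume (K ∩ D) := by
  obtain ⟨s, hs, hcovs⟩ := exists_card_eq_covN hcov
  rw [← hs]
  exact measure_le_card_mul_of_subset_iUnion_vadd hcovs <|
    measure_inter_vadd_le_measure_inter (prekopaLeindler_volume_pi n) hKconv hKsym hDconv hDsym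
      hK hD

theorem stmt0 (n : ℕ) (K D : Set (Fin n → ℝ))
    (hKconv : Convex ℝ K) (hKcomp : IsCompact K) (hKint : (interior K).Nonempty)
    (hKsym : K = -K)
    (hDconv : Convex ℝ D) (hDcomp : IsCompact D) (hDint : (interior D).Nonempty)
    (hDsym : D = -D) :
    volume K / volume (K ∩ D) ≤ (covN K D : ENNReal) ∧
      (covN K D : ENNReal) ≤ 3 ^ n * (volume K / volume (K ∩ D)) := by
  have hB0 : (0 : Fin n → ℝ) ∈ interior (K ∩ D) := by
    rw [interior_inter]
    exact ⟨hKconv.zero_mem_interior_of_eq_neg hKint hKsym,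
      hDconv.zero_mem_interior_of_eq_neg hDint hDsym⟩
  have hBpos : volume (K ∩ D) ≠ 0 := (Measure.measure_pos_of_nonempty_interior _ ⟨0, hB0⟩).ne'
  have hBfin : volume (K ∩ D) ≠ ∞ :=
    (measure_mono inter_subset_left |>.trans_lt hKcomp.measure_lt_top).ne
  obtain ⟨t, hcovB, hcard⟩ := exists_finset_subset_iUnion_vadd_card_mul_le volume hKconv hKcomp
    (hKconv.inter hDconv) (by rw [inter_neg, ← hKsym, ← hDsym])
    (hKcomp.inter_right hDcomp.isClosed).measurableSet inter_subset_left (interior_subset hB0)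
    hBpos
  have hcovD : K ⊆ ⋃ x ∈ t, x +ᵥ D :=
    hcovB.trans (iUnion₂_mono fun x _ => vadd_set_mono inter_subset_right)
  constructor
  · exact ENNReal.div_le_of_le_mul <| volume_le_covN_mul_volume_inter hKconv hKsym hDconv hDsym
      hKcomp.measurableSet hDcomp.measurableSet hcovD
  · rw [← mul_div_assoc, ENNReal.le_div_iff_mul_le (Or.inl hBpos) (Or.inl hBfin)]
    calc (covN K D : ℝ≥0∞) * volume (K ∩ D) ≤ t.card * volume (K ∩ D) := by
          gcongr
          exact covN_le_card hcovD
      _ ≤ 3 ^ n * volume K := by simpa using hcard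
end

section
/- Let α be a norm on R^{n×n}, and let A_OPT maximize det(A) over positive definite matrices A with α(A) ≤ 1, with det(A_OPT) > 0. Then for every T ∈ R^{n×n} with α(T) ≤ 1 such that A_OPT + δT ⪰ 0 for all sufficiently small δ > 0, we have tr(A_OPT^{-1} T) ≤ n. -/
/-!
For small `δ > 0` the matrix `(1 + δ)⁻¹ • (A + δ • T)` is a convex combination of `A` and `T`,
hence feasible, so maximality of `A` gives `det (1 + δ • A⁻¹ T) ≤ (1 + δ) ^ n`. Both sides equal
`1` at `δ = 0`, so their right derivatives there compare: `tr (A⁻¹ T) ≤ n`.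
-/

open Matrix Polynomial Filter Topology

theorem Matrix.hasDerivAt_det_one_add_smul {𝕜 ι : Type*} [NontriviallyNormedField 𝕜] [Fintype ι]
    [DecidableEq ι] (M : Matrix ι ι 𝕜) :
    HasDerivAt (fun r : 𝕜 ↦ (1 + r • M).det) M.trace 0 := by
  have h := (det (1 + (X : 𝕜[X]) • M.map C)).hasDerivAt 0
  rw [derivative_det_one_add_X_smul] at h
  convert h using 1
  ext r
  simp [eval_det, ← smul_eq_mul_diagonal]

theorem HasDerivAt.le_of_eventually_le_nhdsGT {f g : ℝ → ℝ} {f' g' a : ℝ}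
    (hf : HasDerivAt f f' a) (hg : HasDerivAt g g' a) (ha : f a = g a)
    (hfg : ∀ᶠ x in 𝓝[>] a, f x ≤ g x) : f' ≤ g' := by
  have hslope := (hasDerivWithinAt_iff_tendsto_slope' (s := Set.Ioi a) (lt_irrefl a)).mp
    (hg.sub hf).hasDerivWithinAt
  refine sub_nonneg.mp (ge_of_tendsto hslope ?_)
  filter_upwards [hfg, self_mem_nhdsWithin] with x hx (hax : a < x)
  simp only [slope, Pi.sub_apply, ha, sub_self, vsub_eq_sub, smul_eq_mul, sub_zero]
  exact mul_nonneg (inv_nonneg.mpr (sub_nonneg.mpr hax.le)) (sub_nonneg.mpr hx)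

theorem convex_setOf_le_one {E : Type*} [AddCommGroup E] [Module ℝ E] {α : E → ℝ}
    (hα_add : ∀ x y, α (x + y) ≤ α x + α y) (hα_smul : ∀ (c : ℝ) x, α (c • x) = |c| * α x) :
    Convex ℝ {x | α x ≤ 1} := by
  intro x (hx : α x ≤ 1) y (hy : α y ≤ 1) a b ha hb hab
  calc α (a • x + b • y) ≤ a * α x + b * α y := by
        simpa only [hα_smul, abs_of_nonneg ha, abs_of_nonneg hb] using hα_add (a • x) (b • y)
    _ ≤ a * 1 + b * 1 := by gcongr
    _ = 1 := by rw [mul_one, mul_one, hab]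

theorem Matrix.det_smul_add_smul {R ι : Type*} [CommRing R] [Fintype ι] [DecidableEq ι]
    {A : Matrix ι ι R} (hA : IsUnit A.det) (T : Matrix ι ι R) (c δ : R) :
    (c • (A + δ • T)).det = c ^ Fintype.card ι * A.det * (1 + δ • (A⁻¹ * T)).det := by
  rw [det_smul, mul_assoc, ← det_mul, Matrix.mul_add, mul_one, Matrix.mul_smul,
    mul_nonsing_inv_cancel_left _ _ hA]

theorem Matrix.det_one_add_smul_inv_mul_le {ι : Type*} [Fintype ι] [DecidableEq ι]
    {A T : Matrix ι ι ℝ} (hA : 0 < A.det) {δ : ℝ} (hδ : 0 ≤ δ)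
    (h : ((1 + δ)⁻¹ • (A + δ • T)).det ≤ A.det) :
    (1 + δ • (A⁻¹ * T)).det ≤ (1 + δ) ^ Fintype.card ι := by
  rw [det_smul_add_smul hA.ne'.isUnit, inv_pow, mul_assoc, inv_mul_le_iff₀ (by positivity),
    mul_comm _ A.det] at h
  exact le_of_mul_le_mul_left h hA

theorem stmt5_general (n : ℕ) (α : Matrix (Fin n) (Fin n) ℝ → ℝ)
    (hα_add : ∀ S T, α (S + T) ≤ α S + α T)
    (hα_smul : ∀ (c : ℝ) T, α (c • T) = |c| * α T)
    (Aopt : Matrix (Fin n) (Fin n) ℝ)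
    (hAfeas : α Aopt ≤ 1) (hAdet : 0 < Aopt.det)
    (hAopt : ∀ B : Matrix (Fin n) (Fin n) ℝ, B.PosSemidef → α B ≤ 1 → B.det ≤ Aopt.det)
    (T : Matrix (Fin n) (Fin n) ℝ) (hT : α T ≤ 1)
    (hTpert : ∃ δ₀ > 0, ∀ δ : ℝ, 0 < δ → δ ≤ δ₀ → (Aopt + δ • T).PosSemidef) :
    (Aopt⁻¹ * T).trace ≤ n := by
  obtain ⟨δ₀, hδ₀, hpert⟩ := hTpert
  have hdet_le : ∀ᶠ δ in 𝓝[>] 0, (1 + δ • (Aopt⁻¹ * T)).det ≤ (1 + δ) ^ n := by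
    filter_upwards [Ioc_mem_nhdsGT hδ₀] with δ ⟨hδ, hδle⟩
    have hcomb : (1 + δ)⁻¹ • (Aopt + δ • T) = (1 + δ)⁻¹ • Aopt + (δ / (1 + δ)) • T := by
      rw [smul_add, smul_smul, inv_mul_eq_div]
    have hfeas : α ((1 + δ)⁻¹ • (Aopt + δ • T)) ≤ 1 := hcomb ▸
      convex_setOf_le_one hα_add hα_smul hAfeas hT (by positivity) (by positivity)
        (by field_simp)
    simpa using det_one_add_smul_inv_mul_le hAdet hδ.le
      (hAopt _ ((hpert δ hδ hδle).smul (by positivity)) hfeas)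
  have hpow : HasDerivAt (fun δ : ℝ ↦ (1 + δ) ^ n) n 0 := by
    simpa using ((hasDerivAt_id (0 : ℝ)).const_add 1).fun_pow n
  exact (hasDerivAt_det_one_add_smul _).le_of_eventually_le_nhdsGT hpow (by simp) hdet_le

theorem stmt5 (n : ℕ) (α : Matrix (Fin n) (Fin n) ℝ → ℝ)
    (hα_add : ∀ S T, α (S + T) ≤ α S + α T)
    (hα_smul : ∀ (c : ℝ) T, α (c • T) = |c| * α T)
    (hα_pos : ∀ T, α T = 0 → T = 0)
    (Aopt : Matrix (Fin n) (Fin n) ℝ)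
    (hApd : Aopt.PosDef) (hAfeas : α Aopt ≤ 1) (hAdet : 0 < Aopt.det)
    (hAopt : ∀ B : Matrix (Fin n) (Fin n) ℝ, B.PosSemidef → α B ≤ 1 → B.det ≤ Aopt.det)
    (T : Matrix (Fin n) (Fin n) ℝ) (hT : α T ≤ 1)
    (hTpert : ∃ δ₀ > 0, ∀ δ : ℝ, 0 < δ → δ ≤ δ₀ → (Aopt + δ • T).PosSemidef) :
    (Aopt⁻¹ * T).trace ≤ n :=
  stmt5_general n α hα_add hα_smul Aopt hAfeas hAdet hAopt T hT hTpert
end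

section
/- Let A_OPT ≻ 0 be the optimizer of max{det(A) : A ⪰ 0, α(A) ≤ 1} where α(T) ≤ ‖T‖_F for all T. Then the operator norm of A_OPT^{-1} satisfies ‖A_OPT^{-1}‖_2 ≤ n. -/
/-!
Perturb the optimizer in the direction of a rank-one matrix: for `t > 0` the matrix
`(1 + t‖x‖²)⁻¹ (A + t x xᵀ)` is feasible, because `α (x xᵀ) ≤ ‖x xᵀ‖_F = ‖x‖²`, and by the matrix
determinant lemma its determinant is `(1 + t‖x‖²)⁻ⁿ det A (1 + t xᵀA⁻¹x)`. Optimality of `A`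
forces `1 + t xᵀA⁻¹x ≤ (1 + t‖x‖²)ⁿ`, and letting `t → 0⁺` gives `xᵀA⁻¹x ≤ n‖x‖²`. For the
positive semidefinite matrix `A⁻¹` this bound on the quadratic form bounds the operator norm.
-/

open Matrix

/-- Frobenius norm of a matrix. -/
noncomputable def frob {n : ℕ} (T : Matrix (Fin n) (Fin n) ℝ) : ℝ :=
  Real.sqrt (∑ i, ∑ j, T i j ^ 2)

theorem frob_vecMulVec_self {n : ℕ} (x : Fin n → ℝ) : frob (vecMulVec x x) = x ⬝ᵥ x := by
  have hsum : ∑ i, ∑ j, vecMulVec x x i j ^ 2 = (x ⬝ᵥ x) ^ 2 := by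
    simp only [vecMulVec_apply, dotProduct, sq, Finset.sum_mul_sum]
    exact Finset.sum_congr rfl fun i _ => Finset.sum_congr rfl fun j _ => by ring
  rw [frob, hsum, Real.sqrt_sq (by simpa using dotProduct_self_star_nonneg x)]

theorem Matrix.det_add_vecMulVec {ι R : Type*} [Fintype ι] [DecidableEq ι] [CommRing R]
    {A : Matrix ι ι R} (hA : IsUnit A.det) (u v : ι → R) :
    (A + vecMulVec u v).det = A.det * (1 + v ⬝ᵥ A⁻¹ *ᵥ u) := by
  rw [vecMulVec_eq (ι := Unit), det_add_replicateCol_mul_replicateRow hA, Matrix.mul_assoc,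
    ← replicateCol_mulVec, det_unique (n := Unit), add_apply, one_apply_eq,
    replicateRow_mul_replicateCol_apply]

theorem Matrix.PosSemidef.norm_toEuclideanCLM_le {ι : Type*} [Fintype ι] [DecidableEq ι]
    {A : Matrix ι ι ℝ} (hA : A.PosSemidef) {c : ℝ} (hc : 0 ≤ c)
    (h : ∀ x, x ⬝ᵥ A *ᵥ x ≤ c * (x ⬝ᵥ x)) : ‖toEuclideanCLM (𝕜 := ℝ) A‖ ≤ c := by
  rw [ContinuousLinearMap.norm_eq_iSup_rayleighQuotient _
    (isSymmetric_toEuclideanLin_iff.mpr hA.isHermitian)]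
  refine ciSup_le fun x => ?_
  have hquad : ContinuousLinearMap.reApplyInnerSelf (toEuclideanCLM (𝕜 := ℝ) A) x
      = x.ofLp ⬝ᵥ A *ᵥ x.ofLp := by
    simp [ContinuousLinearMap.reApplyInnerSelf, EuclideanSpace.inner_eq_star_dotProduct]
  have hnorm : ‖x‖ ^ 2 = x.ofLp ⬝ᵥ x.ofLp := by
    rw [← real_inner_self_eq_norm_sq, EuclideanSpace.inner_eq_star_dotProduct, star_trivial]
  have hquad_nonneg : 0 ≤ x.ofLp ⬝ᵥ A *ᵥ x.ofLp := by
    simpa using hA.dotProduct_mulVec_nonneg x.ofLp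
  have hnorm_nonneg : 0 ≤ x.ofLp ⬝ᵥ x.ofLp := by
    simpa using dotProduct_self_star_nonneg x.ofLp
  rw [ContinuousLinearMap.rayleighQuotient, hquad, hnorm,
    abs_of_nonneg (div_nonneg hquad_nonneg hnorm_nonneg)]
  exact div_le_of_le_mul₀ hnorm_nonneg hc (h x.ofLp)

open Filter Topology in
theorem le_of_forall_one_add_mul_le_pow {q s : ℝ} {n : ℕ}
    (h : ∀ t : ℝ, 0 < t → 1 + t * q ≤ (1 + t * s) ^ n) : q ≤ n * s := by
  have hder : HasDerivAt (fun t : ℝ => (1 + t * s) ^ n) (n * s) 0 := by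
    simpa [Pi.pow_def] using (((hasDerivAt_id 0).mul_const s).const_add 1).pow n
  refine ge_of_tendsto ((hasDerivAt_iff_tendsto_slope.mp hder).mono_left
    (nhdsWithin_mono _ fun t ht => ne_of_gt ht : 𝓝[>] (0 : ℝ) ≤ 𝓝[≠] 0)) ?_
  filter_upwards [self_mem_nhdsWithin] with t (ht : 0 < t)
  rw [slope_def_field, le_div_iff₀ (by simpa using ht)]
  simp only [sub_zero, zero_mul, add_zero, one_pow]
  linarith [h t ht]

theorem dotProduct_inv_mulVec_le_of_det_le {ι : Type*} [Fintype ι] [DecidableEq ι]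
    {α : Matrix ι ι ℝ → ℝ} (hα_add : ∀ S T, α (S + T) ≤ α S + α T)
    (hα_smul : ∀ (c : ℝ) T, α (c • T) = |c| * α T)
    {A : Matrix ι ι ℝ} (hA : A.PosDef) (hAα : α A ≤ 1)
    (hAmax : ∀ B : Matrix ι ι ℝ, B.PosSemidef → α B ≤ 1 → B.det ≤ A.det)
    {x : ι → ℝ} (hx : α (vecMulVec x x) ≤ x ⬝ᵥ x) :
    x ⬝ᵥ A⁻¹ *ᵥ x ≤ Fintype.card ι * (x ⬝ᵥ x) := by
  refine le_of_forall_one_add_mul_le_pow fun t ht => ?_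
  set s := x ⬝ᵥ x
  set q := x ⬝ᵥ A⁻¹ *ᵥ x
  have hs : 0 < 1 + t * s := by
    have : 0 ≤ s := by simpa using dotProduct_self_star_nonneg x
    positivity
  set B := (1 + t * s)⁻¹ • (A + t • vecMulVec x x)
  have hB_psd : B.PosSemidef :=
    (hA.posSemidef.add ((posSemidef_vecMulVec_self_star x).smul ht.le)).smul (by positivity)
  have hBα : α B ≤ 1 := by
    rw [hα_smul, abs_of_pos (inv_pos.mpr hs), inv_mul_le_one₀ hs]
    grw [hα_add, hα_smul, abs_of_pos ht, hAα, hx]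
  have hB_det : B.det = ((1 + t * s) ^ Fintype.card ι)⁻¹ * (A.det * (1 + t * q)) := by
    rw [det_smul, inv_pow, ← smul_vecMulVec, det_add_vecMulVec hA.det_pos.ne'.isUnit,
      mulVec_smul, dotProduct_smul, smul_eq_mul]
  have hdet_le := hAmax B hB_psd hBα
  rw [hB_det, inv_mul_le_iff₀ (by positivity), mul_comm] at hdet_le
  exact le_of_mul_le_mul_right hdet_le hA.det_pos

theorem stmt6_general (n : ℕ) (α : Matrix (Fin n) (Fin n) ℝ → ℝ)
    (hα_add : ∀ S T, α (S + T) ≤ α S + α T)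
    (hα_smul : ∀ (c : ℝ) T, α (c • T) = |c| * α T)
    (hαF : ∀ T, α T ≤ frob T)
    (Aopt : Matrix (Fin n) (Fin n) ℝ)
    (hApd : Aopt.PosDef) (hAfeas : α Aopt ≤ 1)
    (hAopt : ∀ B : Matrix (Fin n) (Fin n) ℝ, B.PosSemidef → α B ≤ 1 → B.det ≤ Aopt.det) :
    ‖Matrix.toEuclideanCLM (𝕜 := ℝ) Aopt⁻¹‖ ≤ n := by
  refine hApd.inv.posSemidef.norm_toEuclideanCLM_le (Nat.cast_nonneg n) fun x => ?_
  simpa using dotProduct_inv_mulVec_le_of_det_le hα_add hα_smul hApd hAfeas hAopt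
    ((hαF _).trans (frob_vecMulVec_self x).le)

theorem stmt6 (n : ℕ) (α : Matrix (Fin n) (Fin n) ℝ → ℝ)
    (hα_add : ∀ S T, α (S + T) ≤ α S + α T)
    (hα_smul : ∀ (c : ℝ) T, α (c • T) = |c| * α T)
    (hα_pos : ∀ T, α T = 0 → T = 0)
    (hαF : ∀ T, α T ≤ frob T)
    (Aopt : Matrix (Fin n) (Fin n) ℝ)
    (hApd : Aopt.PosDef) (hAfeas : α Aopt ≤ 1)
    (hAopt : ∀ B : Matrix (Fin n) (Fin n) ℝ, B.PosSemidef → α B ≤ 1 → B.det ≤ Aopt.det) :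
    ‖Matrix.toEuclideanCLM (𝕜 := ℝ) Aopt⁻¹‖ ≤ n :=
  stmt6_general n α hα_add hα_smul hαF Aopt hApd hAfeas hAopt
end

section
/- Let B ≻ 0 be an n×n positive definite matrix with tr(B) ≤ n and det(B) ≥ 1 - nε for some ε with 0 ≤ nε < 1. Then the smallest eigenvalue of B is at least 1 - 3√(nε); equivalently B ⪰ (1 - 3√(nε)) I_n. -/
/-!
Let `λ` be an eigenvalue of `B`. Bounding every other eigenvalue `μ` by `e ^ (μ - 1)` and
using `tr B ≤ n` gives `det B ≤ λ e ^ (1 - λ)`, and `(1 - x) e ^ x ≤ 1 - x² / 2` for `x ≥ 0`.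
Hence `1 - nε ≤ det B` forces `(1 - λ)² ≤ 2nε`, so `λ ≥ 1 - √(2nε) ≥ 1 - 3√(nε)`.
-/

open Matrix

theorem Real.one_sub_mul_exp_le {x : ℝ} (hx : 0 ≤ x) : (1 - x) * exp x ≤ 1 - x ^ 2 / 2 := by
  rcases le_total x 1 with hx1 | hx1
  · have h := exp_bound' hx hx1 (n := 3) (by norm_num)
    norm_num [Finset.sum_range_succ, Nat.factorial] at h
    nlinarith [mul_le_mul_of_nonneg_left h (sub_nonneg.2 hx1), pow_nonneg hx 3, pow_nonneg hx 4]
  · nlinarith [mul_le_mul_of_nonneg_left (quadratic_le_exp_of_nonneg hx) (sub_nonneg.2 hx1),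
      pow_nonneg hx 3]

section SumLeCard

variable {ι : Type*} [Fintype ι] {f : ι → ℝ}

theorem prod_le_mul_exp_one_sub_of_sum_le_card (hf : ∀ i, 0 ≤ f i)
    (hsum : ∑ i, f i ≤ Fintype.card ι) (i : ι) : ∏ j, f j ≤ f i * Real.exp (1 - f i) := by
  classical
  have hrest : ∑ j ∈ Finset.univ.erase i, (f j - 1) ≤ 1 - f i := by
    rw [Finset.sum_erase_eq_sub (Finset.mem_univ i), Finset.sum_sub_distrib]
    simp only [Finset.sum_const, Finset.card_univ, nsmul_eq_mul, mul_one]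
    linarith
  calc ∏ j, f j = f i * ∏ j ∈ Finset.univ.erase i, f j :=
        (Finset.mul_prod_erase _ _ (Finset.mem_univ i)).symm
    _ ≤ f i * ∏ j ∈ Finset.univ.erase i, Real.exp (f j - 1) := by
        gcongr with j
        · exact hf i
        · exact fun j _ => hf j
        · linarith [Real.add_one_le_exp (f j - 1)]
    _ = f i * Real.exp (∑ j ∈ Finset.univ.erase i, (f j - 1)) := by rw [Real.exp_sum]
    _ ≤ f i * Real.exp (1 - f i) :=
        mul_le_mul_of_nonneg_left (Real.exp_le_exp.2 hrest) (hf i)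

theorem one_sub_sqrt_two_mul_le_of_sum_le_card {t : ℝ} (hf : ∀ i, 0 ≤ f i)
    (hsum : ∑ i, f i ≤ Fintype.card ι) (hprod : 1 - t ≤ ∏ j, f j) (i : ι) :
    1 - √(2 * t) ≤ f i := by
  rcases le_total 1 (f i) with h | h
  · linarith [Real.sqrt_nonneg (2 * t)]
  have hexp := Real.one_sub_mul_exp_le (x := 1 - f i) (by linarith)
  rw [sub_sub_cancel] at hexp
  have hsq : (1 - f i) ^ 2 ≤ 2 * t := by
    linarith [prod_le_mul_exp_one_sub_of_sum_le_card hf hsum i]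
  linarith [Real.abs_le_sqrt hsq, le_abs_self (1 - f i)]

end SumLeCard

open scoped ComplexOrder in
theorem Matrix.IsHermitian.posSemidef_sub_smul_one {n 𝕜 : Type*} [Fintype n] [DecidableEq n]
    [RCLike 𝕜] {A : Matrix n n 𝕜} (hA : A.IsHermitian) {c : ℝ}
    (h : ∀ i, c ≤ hA.eigenvalues i) :
    (A - c • 1).PosSemidef := by
  refine posSemidef_iff_isHermitian_and_spectrum_nonneg.2
    ⟨hA.sub (isHermitian_one.smul (.all c)), ?_⟩
  rw [RCLike.real_smul_eq_coe_smul (K := 𝕜) c, ← Algebra.algebraMap_eq_smul_one,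
    ← spectrum.sub_singleton_eq, hA.spectrum_eq_image_range]
  rintro _ ⟨_, ⟨_, ⟨i, rfl⟩, rfl⟩, _, rfl, rfl⟩
  simpa using h i

theorem stmt7_general (n : ℕ) (B : Matrix (Fin n) (Fin n) ℝ) (ε : ℝ)
    (hB : B.PosDef) (htr : B.trace ≤ n) (hdet : 1 - n * ε ≤ B.det) :
    (B - (1 - 3 * Real.sqrt (n * ε)) • (1 : Matrix (Fin n) (Fin n) ℝ)).PosSemidef := by
  have hH := hB.isHermitian
  have hsum : ∑ i, hH.eigenvalues i ≤ Fintype.card (Fin n) := by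
    simpa [hH.trace_eq_sum_eigenvalues] using htr
  have hprod : 1 - n * ε ≤ ∏ i, hH.eigenvalues i := by
    simpa [hH.det_eq_prod_eigenvalues] using hdet
  have hsqrt : √(2 * (n * ε)) ≤ 3 * √(n * ε) := by
    rw [Real.sqrt_mul zero_le_two]
    gcongr
    nlinarith [Real.sq_sqrt (zero_le_two (α := ℝ)), Real.sqrt_nonneg 2]
  refine hH.posSemidef_sub_smul_one fun i => ?_
  linarith [one_sub_sqrt_two_mul_le_of_sum_le_card (fun j => (hB.eigenvalues_pos j).le)
    hsum hprod i]

theorem stmt7 (n : ℕ) (B : Matrix (Fin n) (Fin n) ℝ) (ε : ℝ)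
    (hB : B.PosDef) (htr : B.trace ≤ n) (hdet : 1 - n * ε ≤ B.det)
    (hε0 : 0 ≤ n * ε) (hε1 : n * ε < 1) :
    (B - (1 - 3 * Real.sqrt (n * ε)) • (1 : Matrix (Fin n) (Fin n) ℝ)).PosSemidef :=
  stmt7_general n B ε hB htr hdet
end

section
/- If A ≻ 0 is a (1-ε)-approximate optimizer (in det^{1/n}) of the program max{det(A) : A ⪰ 0, α(A) ≤ 1} with optimum A_OPT, where α(T) ≤ ‖T‖_F, and nε < 1, then A^{-1} ⪯ (1 + 6√(nε)) A_OPT^{-1} provided ε ≤ 1/(36n). -/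
/-!
Write `Aopt = S * S` and `A = S * M * S` with `M` positive definite, with eigenvalues `μᵢ`.
Near-optimality of `A` gives `∏ μᵢ = det A / det Aopt ≥ (1 - ε)ⁿ ≥ 1 - nε`, while optimality of
`Aopt` against the feasible midpoint `(A + Aopt) / 2` gives `∏ (1 + μᵢ) ≤ 2ⁿ`. As
`4μ ≤ (1 + μ)²`, every single factor `4μₖ / (1 + μₖ)²` dominates the whole product, which is at
least `1 - nε`; this pins `μₖ` near `1`, namely `μₖ⁻¹ ≤ 1 + 6√(nε)`. Hence
`M⁻¹ ⪯ (1 + 6√(nε)) • 1`, and conjugating by `S⁻¹` gives the claim.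
-/

open Matrix

lemma pow_mul_le_of_mul_rpow_le {a x y : ℝ} {n : ℕ} (hn : n ≠ 0) (ha : 0 ≤ a) (hx : 0 ≤ x)
    (hy : 0 ≤ y) (h : a * x ^ (1 / n : ℝ) ≤ y ^ (1 / n : ℝ)) : a ^ n * x ≤ y := by
  have := pow_le_pow_left₀ (by positivity) h n
  rwa [mul_pow, one_div, Real.rpow_inv_natCast_pow hx hn, Real.rpow_inv_natCast_pow hy hn] at this

lemma inv_le_one_add_six_sqrt_of_sq_le {μ t : ℝ} (hμ : 0 < μ) (ht0 : 0 ≤ t) (ht : t ≤ 4 / 9)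
    (h : (1 - t) * (1 + μ) ^ 2 ≤ 4 * μ) : μ⁻¹ ≤ 1 + 6 * Real.sqrt t := by
  set u := Real.sqrt t
  have hu0 : 0 ≤ u := Real.sqrt_nonneg t
  have hut : u ^ 2 = t := Real.sq_sqrt ht0
  have hu : u ≤ 2 / 3 := Real.sqrt_le_iff.mpr ⟨by norm_num, by linarith⟩
  -- `(1 - μ)² = (1 + μ)² - 4μ ≤ t (1 + μ)²`
  have hsq : (1 - μ) ^ 2 ≤ (u * (1 + μ)) ^ 2 := by nlinarith
  have hlin : 1 - μ ≤ u * (1 + μ) := (abs_le_of_sq_le_sq' hsq (by positivity)).2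
  rw [inv_le_iff_one_le_mul₀ hμ]
  nlinarith

lemma one_sub_mul_one_add_sq_le {ι : Type*} [Fintype ι] {μ : ι → ℝ} (hμ : ∀ i, 0 < μ i)
    {t : ℝ} (hdet : 1 - t ≤ ∏ i, μ i) (hmid : ∏ i, (1 + μ i) ≤ 2 ^ Fintype.card ι) (k : ι) :
    (1 - t) * (1 + μ k) ^ 2 ≤ 4 * μ k := by
  classical
  set a : ι → ℝ := fun i ↦ 4 * μ i / (1 + μ i) ^ 2
  have ha : ∀ i, 0 ≤ a i ∧ a i ≤ 1 := fun i ↦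
    ⟨by have := hμ i; positivity,
      div_le_one_of_le₀ (by nlinarith [sq_nonneg (1 - μ i)]) (sq_nonneg _)⟩
  have hprod : ∏ i, a i = (4 ^ Fintype.card ι * ∏ i, μ i) / (∏ i, (1 + μ i)) ^ 2 := by
    simp only [a, Finset.prod_div_distrib, Finset.prod_mul_distrib, Finset.prod_pow,
      Finset.prod_const, Finset.card_univ]
  have hlow : 1 - t ≤ ∏ i, a i := by
    have hP : 0 < ∏ i, μ i := Finset.prod_pos fun i _ ↦ hμ i
    have hQ : 0 < ∏ i, (1 + μ i) := Finset.prod_pos fun i _ ↦ by linarith [hμ i]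
    have hQ4 : (∏ i, (1 + μ i)) ^ 2 ≤ 4 ^ Fintype.card ι := by
      calc (∏ i, (1 + μ i)) ^ 2 ≤ (2 ^ Fintype.card ι) ^ 2 := by gcongr
        _ = 4 ^ Fintype.card ι := by rw [← pow_mul, mul_comm, pow_mul]; norm_num
    rw [hprod, le_div_iff₀ (by positivity)]
    calc (1 - t) * (∏ i, (1 + μ i)) ^ 2 ≤ (∏ i, μ i) * 4 ^ Fintype.card ι := by
          gcongr ?_ * ?_
      _ = _ := mul_comm _ _
  have hle : ∏ i, a i ≤ a k := by
    rw [← Finset.mul_prod_erase _ _ (Finset.mem_univ k)]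
    exact mul_le_of_le_one_right (ha k).1
      (Finset.prod_le_one (fun i _ ↦ (ha i).1) fun i _ ↦ (ha i).2)
  have := hlow.trans hle
  rwa [le_div_iff₀ (by have := hμ k; positivity)] at this

variable {ι : Type*} [Fintype ι] [DecidableEq ι]

lemma Matrix.IsHermitian.det_cfc {M : Matrix ι ι ℝ} (hM : M.IsHermitian) (f : ℝ → ℝ) :
    (cfc f M).det = ∏ i, f (hM.eigenvalues i) := by
  rw [hM.cfc_eq]
  simp [IsHermitian.cfc, -Unitary.conjStarAlgAut_apply]

lemma Matrix.IsHermitian.det_one_add {M : Matrix ι ι ℝ} (hM : M.IsHermitian) :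
    (1 + M).det = ∏ i, (1 + hM.eigenvalues i) := by
  rw [← hM.det_cfc, cfc_const_add 1 (fun x ↦ x) M, cfc_id' ℝ M, map_one]

lemma Matrix.PosDef.posSemidef_smul_one_sub_inv {M : Matrix ι ι ℝ} (hM : M.PosDef) {c : ℝ}
    (hc : ∀ i, (hM.1.eigenvalues i)⁻¹ ≤ c) : (c • 1 - M⁻¹).PosSemidef := by
  open scoped MatrixOrder in
  have : cfc (·⁻¹ : ℝ → ℝ) M ≤ algebraMap ℝ _ c := by
    refine cfc_le_algebraMap _ c M ?_ (M.finite_real_spectrum.continuousOn _)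
    rw [hM.1.spectrum_real_eq_range_eigenvalues]
    rintro - ⟨i, rfl⟩
    exact hc i
  rwa [← hM.isUnit.unit_spec, cfc_inv_id (ha := hM.1), Algebra.algebraMap_eq_smul_one,
    coe_units_inv] at this

theorem Matrix.PosDef.posSemidef_smul_one_sub_inv_of_det {M : Matrix ι ι ℝ} (hM : M.PosDef)
    {t : ℝ} (ht0 : 0 ≤ t) (ht : t ≤ 4 / 9) (hdet : 1 - t ≤ M.det)
    (hmid : (1 + M).det ≤ 2 ^ Fintype.card ι) :
    ((1 + 6 * Real.sqrt t) • 1 - M⁻¹).PosSemidef := by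
  refine hM.posSemidef_smul_one_sub_inv fun k ↦
    inv_le_one_add_six_sqrt_of_sq_le (hM.eigenvalues_pos k) ht0 ht ?_
  refine one_sub_mul_one_add_sq_le hM.eigenvalues_pos ?_ ?_ k
  · simpa [hM.1.det_eq_prod_eigenvalues] using hdet
  · rwa [← hM.1.det_one_add]

lemma Matrix.PosDef.exists_eq_mul_mul_of_eq_mul_self {A B : Matrix ι ι ℝ} (hA : A.PosDef)
    (hB : B.PosDef) :
    ∃ S M : Matrix ι ι ℝ, S.IsHermitian ∧ M.PosDef ∧ B = S * S ∧ A = S * M * S := by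
  open scoped MatrixOrder in
  obtain ⟨hS, hSunit, hSS⟩ : (CFC.sqrt B).IsHermitian ∧ IsUnit (CFC.sqrt B) ∧
      CFC.sqrt B * CFC.sqrt B = B :=
    ⟨(CFC.sqrt_nonneg B).posSemidef.1, (CFC.isUnit_sqrt_iff B).mpr hB.isUnit,
      CFC.sqrt_mul_sqrt_self B⟩
  set S := CFC.sqrt B
  refine ⟨S, S⁻¹ * A * S⁻¹, hS, ?_, hSS.symm, ?_⟩
  · have := hA.conjTranspose_mul_mul_same
      (mulVec_injective_of_isUnit (isUnit_nonsing_inv_iff.mpr hSunit))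
    rwa [hS.inv.eq] at this
  · have hdet := (isUnit_iff_isUnit_det S).mp hSunit
    rw [← mul_assoc, mul_nonsing_inv_cancel_left _ _ hdet, nonsing_inv_mul_cancel_right _ _ hdet]

lemma det_one_add_le_of_det_midpoint_le {S M : Matrix ι ι ℝ} (hS : 0 < (S * S).det)
    (h : ((2⁻¹ : ℝ) • (S * M * S + S * S)).det ≤ (S * S).det) :
    (1 + M).det ≤ 2 ^ Fintype.card ι := by
  have hsum : S * M * S + S * S = S * (1 + M) * S := by noncomm_ring
  rw [hsum, det_smul, det_mul, det_mul, inv_pow, det_mul] at h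
  rw [det_mul] at hS
  have h2 : (0 : ℝ) < 2 ^ Fintype.card ι := by positivity
  rw [inv_mul_le_iff₀ h2] at h
  nlinarith

lemma smul_inv_mul_self_sub_inv_mul_mul {R : Type*} [CommRing R] (S M : Matrix ι ι R) (c : R) :
    c • (S * S)⁻¹ - (S * M * S)⁻¹ = S⁻¹ * (c • 1 - M⁻¹) * S⁻¹ := by
  simp only [Matrix.mul_inv_rev, Matrix.mul_sub, Matrix.sub_mul, mul_smul_comm, smul_mul_assoc,
    mul_one, mul_assoc]

theorem stmt10_general (n : ℕ) (hn : 0 < n) (α : Matrix (Fin n) (Fin n) ℝ → ℝ)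
    (hα_add : ∀ S T, α (S + T) ≤ α S + α T)
    (hα_smul : ∀ (c : ℝ) T, α (c • T) = |c| * α T)
    (Aopt : Matrix (Fin n) (Fin n) ℝ) (hAoptpd : Aopt.PosDef) (hAoptfeas : α Aopt ≤ 1)
    (hAoptmax : ∀ B : Matrix (Fin n) (Fin n) ℝ, B.PosSemidef → α B ≤ 1 →
      B.det ≤ Aopt.det)
    (A : Matrix (Fin n) (Fin n) ℝ) (hApd : A.PosDef) (hAfeas : α A ≤ 1)
    (ε : ℝ) (hε0 : 0 ≤ ε) (hε : ε ≤ 1 / (36 * n))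
    (hAapprox : (1 - ε) * Aopt.det ^ ((1 : ℝ) / n) ≤ A.det ^ ((1 : ℝ) / n)) :
    ((1 + 6 * Real.sqrt (n * ε)) • Aopt⁻¹ - A⁻¹).PosSemidef := by
  obtain ⟨S, M, hS, hM, rfl, rfl⟩ := hApd.exists_eq_mul_mul_of_eq_mul_self hAoptpd
  have hSS := hAoptpd.det_pos
  have ht : (n : ℝ) * ε ≤ 1 / 36 :=
    calc (n : ℝ) * ε ≤ n * (1 / (36 * n)) := by gcongr
      _ = 1 / 36 := by field_simp
  have hdet : 1 - n * ε ≤ M.det := by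
    have hεn : ε ≤ n * ε := le_mul_of_one_le_left hε0 (by exact_mod_cast hn)
    have hpow := pow_mul_le_of_mul_rpow_le hn.ne' (by linarith) hSS.le hApd.det_pos.le hAapprox
    rw [show (S * M * S).det = M.det * (S * S).det by simp only [det_mul]; ring] at hpow
    have hbern := one_add_mul_le_pow (show -2 ≤ -ε by linarith) n
    rw [mul_neg, ← sub_eq_add_neg, ← sub_eq_add_neg] at hbern
    exact hbern.trans (le_of_mul_le_mul_right hpow hSS)
  have hmid : (1 + M).det ≤ 2 ^ Fintype.card (Fin n) := by
    refine det_one_add_le_of_det_midpoint_le hSS (hAoptmax _ ?_ ?_)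
    · exact (hApd.posSemidef.add hAoptpd.posSemidef).smul (by norm_num)
    · rw [hα_smul, abs_of_pos (by norm_num)]
      linarith [hα_add (S * M * S) (S * S)]
  have key := hM.posSemidef_smul_one_sub_inv_of_det (by positivity) (by linarith) hdet hmid
  have := key.conjTranspose_mul_mul_same S⁻¹
  rwa [hS.inv.eq, ← smul_inv_mul_self_sub_inv_mul_mul] at this

theorem stmt10 (n : ℕ) (hn : 0 < n) (α : Matrix (Fin n) (Fin n) ℝ → ℝ)
    (hα_add : ∀ S T, α (S + T) ≤ α S + α T)
    (hα_smul : ∀ (c : ℝ) T, α (c • T) = |c| * α T)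
    (hα_pos : ∀ T, α T = 0 → T = 0)
    (hαF : ∀ T, α T ≤ frob T)
    (Aopt : Matrix (Fin n) (Fin n) ℝ) (hAoptpd : Aopt.PosDef) (hAoptfeas : α Aopt ≤ 1)
    (hAoptmax : ∀ B : Matrix (Fin n) (Fin n) ℝ, B.PosSemidef → α B ≤ 1 →
      B.det ≤ Aopt.det)
    (A : Matrix (Fin n) (Fin n) ℝ) (hApd : A.PosDef) (hAfeas : α A ≤ 1)
    (ε : ℝ) (hε0 : 0 ≤ ε) (hε1 : n * ε < 1) (hε : ε ≤ 1 / (36 * n))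
    (hAapprox : (1 - ε) * Aopt.det ^ ((1 : ℝ) / n) ≤ A.det ^ ((1 : ℝ) / n)) :
    ((1 + 6 * Real.sqrt (n * ε)) • Aopt⁻¹ - A⁻¹).PosSemidef :=
  stmt10_general n hn α hα_add hα_smul Aopt hAoptpd hAoptfeas hAoptmax A hApd hAfeas ε hε0 hε
    hAapprox
end

section
/- For any norm α on R^{n×n}, there exists an invertible A ∈ R^{n×n} with α(A) = 1 and α*(A^{-1}) = n, where α*(S) = sup{tr(SA) : α(A) ≤ 1} (Lewis's theorem). -/
open Matrix

/-- Dual norm `α*(S) = sup {tr(SA) : α(A) ≤ 1}`. -/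
noncomputable def dualNorm {n : ℕ} (α : Matrix (Fin n) (Fin n) ℝ → ℝ)
    (S : Matrix (Fin n) (Fin n) ℝ) : ℝ :=
  sSup {t | ∃ B : Matrix (Fin n) (Fin n) ℝ, α B ≤ 1 ∧ (S * B).trace = t}

/-!
Choose `A` maximizing `|det|` on the unit ball of `α`, which is compact because all norms on a
finite-dimensional space are comparable. Homogeneity gives `|det C| ≤ |det A| α(C)ⁿ` for every
`C`, whence `α(A) = 1`. If `α(B) ≤ 1` then `α(A + tB) ≤ 1 + t`, so
`det (1 + t A⁻¹B) ≤ (1 + t)ⁿ` for `t > 0`; both sides agree at `t = 0`, and comparing their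
derivatives there gives `tr (A⁻¹B) ≤ n`, with equality for `B = A`.
-/

open Polynomial Filter Topology

theorem HasDerivAt.nonneg_of_forall_gt {g : ℝ → ℝ} {g' a : ℝ} (hg : HasDerivAt g g' a)
    (h : ∀ t > a, g a ≤ g t) : 0 ≤ g' := by
  have hslope : Tendsto (slope g a) (𝓝[>] a) (𝓝 g') :=
    (hasDerivAt_iff_tendsto_slope.mp hg).mono_left (nhdsWithin_mono a fun _ ht ↦ ne_of_gt ht)
  refine ge_of_tendsto hslope (eventually_nhdsWithin_of_forall fun t (ht : a < t) ↦ ?_)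
  rw [slope_def_field]
  exact div_nonneg (sub_nonneg.mpr (h t ht)) (sub_nonneg.mpr ht.le)

namespace Matrix

variable {m : Type*} [Fintype m] [DecidableEq m]

theorem hasDerivAt_det_one_add_smul_s11 {𝕜 : Type*} [NontriviallyNormedField 𝕜] (M : Matrix m m 𝕜) :
    HasDerivAt (fun t : 𝕜 ↦ (1 + t • M).det) M.trace 0 := by
  have hpoly : (fun t : 𝕜 ↦ (1 + t • M).det) =
      fun t ↦ (det (1 + (X : 𝕜[X]) • M.map C)).eval t := by
    ext t
    rw [← coe_evalRingHom, RingHom.map_det]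
    congr 1
    ext i j
    by_cases h : i = j <;> simp [h, mul_comm t]
  rw [hpoly, ← derivative_det_one_add_X_smul M]
  exact Polynomial.hasDerivAt _ 0

theorem trace_le_of_det_one_add_smul_le (M : Matrix m m ℝ)
    (h : ∀ t > 0, (1 + t • M).det ≤ (1 + t) ^ Fintype.card m) : M.trace ≤ Fintype.card m := by
  have hpow : HasDerivAt (fun t : ℝ ↦ (1 + t) ^ Fintype.card m) (Fintype.card m) 0 := by
    simpa using ((hasDerivAt_id (0 : ℝ)).const_add 1).fun_pow (Fintype.card m)
  have := (hpow.sub (hasDerivAt_det_one_add_smul_s11 M)).nonneg_of_forall_gt fun t ht ↦ by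
    simpa using h t ht
  linarith

end Matrix

namespace Seminorm

variable {E : Type*} [NormedAddCommGroup E] [NormedSpace ℝ E] [FiniteDimensional ℝ E]
  (p : Seminorm ℝ E)

protected theorem continuous_of_finiteDimensional : Continuous p :=
  p.convexOn.locallyLipschitz.continuous

theorem exists_pos_mul_norm_le (hp : ∀ x, p x = 0 → x = 0) : ∃ c > 0, ∀ x, c * ‖x‖ ≤ p x := by
  obtain ⟨c, hc, hcp⟩ := (isCompact_sphere (0 : E) 1).exists_forall_le'
    p.continuous_of_finiteDimensional.continuousOn fun x hx ↦
      (apply_nonneg p x).lt_of_ne fun h ↦ by simp [hp x h.symm] at hx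
  refine ⟨c, hc, fun x ↦ ?_⟩
  rcases eq_or_ne x 0 with rfl | hx
  · simp
  have hxn : 0 < ‖x‖ := norm_pos_iff.mpr hx
  have := hcp (‖x‖⁻¹ • x) (by simp [norm_smul, hxn.ne'])
  rw [map_smul_eq_mul, norm_inv, norm_norm, le_inv_mul_iff₀ hxn] at this
  rwa [mul_comm]

theorem isCompact_closedBall_zero (hp : ∀ x, p x = 0 → x = 0) (r : ℝ) :
    IsCompact (p.closedBall 0 r) := by
  obtain ⟨c, hc, hcp⟩ := p.exists_pos_mul_norm_le hp
  refine Metric.isCompact_of_isClosed_isBounded ?_ ?_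
  · rw [closedBall_zero_eq]
    exact isClosed_le p.continuous_of_finiteDimensional continuous_const
  · refine (Metric.isBounded_closedBall (x := (0 : E)) (r := r / c)).subset fun x hx ↦ ?_
    rw [mem_closedBall_zero] at hx
    rw [mem_closedBall_zero_iff, le_div_iff₀' hc]
    exact (hcp x).trans hx

end Seminorm

namespace Matrix

variable {m : Type*} [Fintype m] [DecidableEq m] {p : Seminorm ℝ (Matrix m m ℝ)}
  {A : Matrix m m ℝ}

theorem abs_det_le_mul_pow_of_isMaxOn (hp : ∀ C, p C = 0 → C = 0)
    (hA : IsMaxOn (fun B ↦ |B.det|) (p.closedBall 0 1) A) (C : Matrix m m ℝ) :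
    |C.det| ≤ |A.det| * p C ^ Fintype.card m := by
  rcases (apply_nonneg p C).eq_or_lt' with hC | hC
  · obtain rfl : C = (0 : ℝ) • A := by rw [zero_smul]; exact hp C hC
    rw [det_smul, map_smul_eq_mul, norm_zero, zero_mul, abs_mul, abs_pow, abs_zero, mul_comm]
  have hmem : (p C)⁻¹ • C ∈ p.closedBall 0 1 := by
    rw [Seminorm.mem_closedBall_zero, map_smul_eq_mul, norm_inv, Real.norm_of_nonneg hC.le,
      inv_mul_cancel₀ hC.ne']
  have : |((p C)⁻¹ • C).det| ≤ |A.det| := hA hmem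
  simp only [det_smul, abs_mul, abs_pow, abs_inv, abs_of_pos hC, inv_pow] at this
  rwa [inv_mul_le_iff₀ (pow_pos hC _), mul_comm] at this

theorem det_ne_zero_of_isMaxOn (hA : IsMaxOn (fun B ↦ |B.det|) (p.closedBall 0 1) A) :
    A.det ≠ 0 := by
  set c := (p 1 + 1)⁻¹
  have hc : 0 < c := inv_pos.mpr (by linarith [apply_nonneg p 1])
  have hmem : c • (1 : Matrix m m ℝ) ∈ p.closedBall 0 1 := by
    rw [Seminorm.mem_closedBall_zero, map_smul_eq_mul, Real.norm_of_nonneg hc.le, inv_mul_le_one₀]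
    all_goals linarith [apply_nonneg p 1]
  have : |(c • (1 : Matrix m m ℝ)).det| ≤ |A.det| := hA hmem
  simp only [det_smul, det_one, mul_one] at this
  exact abs_pos.mp ((by positivity : 0 < |c ^ Fintype.card m|).trans_le this)

theorem map_eq_one_of_isMaxOn [Nonempty m] (hp : ∀ C, p C = 0 → C = 0)
    (hA : IsMaxOn (fun B ↦ |B.det|) (p.closedBall 0 1) A) (hA₁ : p A ≤ 1) : p A = 1 := by
  have hdet := abs_pos.mpr (det_ne_zero_of_isMaxOn hA)
  have := abs_det_le_mul_pow_of_isMaxOn hp hA A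
  rw [le_mul_iff_one_le_right hdet, one_le_pow_iff_of_nonneg (apply_nonneg p A)
    Fintype.card_ne_zero] at this
  exact hA₁.antisymm this

theorem trace_inv_mul_le_of_isMaxOn (hp : ∀ C, p C = 0 → C = 0)
    (hA : IsMaxOn (fun B ↦ |B.det|) (p.closedBall 0 1) A) (hA₁ : p A ≤ 1)
    {B : Matrix m m ℝ} (hB : p B ≤ 1) : (A⁻¹ * B).trace ≤ Fintype.card m := by
  have hdet := det_ne_zero_of_isMaxOn hA
  refine trace_le_of_det_one_add_smul_le _ fun t ht ↦ ?_
  have hmul : A * (1 + t • (A⁻¹ * B)) = A + t • B := by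
    rw [Matrix.mul_add, Matrix.mul_one, Matrix.mul_smul, ← Matrix.mul_assoc,
      mul_nonsing_inv _ (isUnit_iff_ne_zero.mpr hdet), Matrix.one_mul]
  have hsum : p (A + t • B) ≤ 1 + t := by
    refine (map_add_le_add p _ _).trans ?_
    rw [map_smul_eq_mul, Real.norm_of_nonneg ht.le]
    nlinarith
  have key : |A.det| * |(1 + t • (A⁻¹ * B)).det| ≤ |A.det| * (1 + t) ^ Fintype.card m := by
    rw [← abs_mul, ← det_mul, hmul]
    exact (abs_det_le_mul_pow_of_isMaxOn hp hA _).trans (by gcongr)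
  exact (le_abs_self _).trans (le_of_mul_le_mul_left key (abs_pos.mpr hdet))

end Matrix

attribute [local instance] Matrix.normedAddCommGroup Matrix.normedSpace

/-- Lewis's theorem. -/
theorem stmt11 (n : ℕ) (hn : 0 < n) (α : Matrix (Fin n) (Fin n) ℝ → ℝ)
    (hα_add : ∀ S T, α (S + T) ≤ α S + α T)
    (hα_smul : ∀ (c : ℝ) T, α (c • T) = |c| * α T)
    (hα_pos : ∀ T, α T = 0 → T = 0) :
    ∃ A : Matrix (Fin n) (Fin n) ℝ,
      IsUnit A.det ∧ α A = 1 ∧ dualNorm α A⁻¹ = n := by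
  have : Nonempty (Fin n) := ⟨⟨0, hn⟩⟩
  let p : Seminorm ℝ (Matrix (Fin n) (Fin n) ℝ) := .of α hα_add hα_smul
  obtain ⟨A, hA₁, hA⟩ := (p.isCompact_closedBall_zero hα_pos 1).exists_isMaxOn
    ⟨0, by simp⟩ (continuous_id.matrix_det.abs).continuousOn
  have hA₁ : p A ≤ 1 := p.mem_closedBall_zero.mp hA₁
  have hunit : IsUnit A.det := isUnit_iff_ne_zero.mpr (det_ne_zero_of_isMaxOn hA)
  have hαA : α A = 1 := map_eq_one_of_isMaxOn hα_pos hA hA₁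
  refine ⟨A, hunit, hαA, IsGreatest.csSup_eq ⟨⟨A, hαA.le, ?_⟩, ?_⟩⟩
  · simp [nonsing_inv_mul A hunit]
  · rintro _ ⟨B, hB, rfl⟩
    simpa using trace_inv_mul_le_of_isMaxOn hα_pos hA hA₁ hB
end
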